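/- Subformula property: in any IELG⁻-derivation of a sequent Γ ⇒ F, every formula occurring in any sequent of the derivation is a subformula of some formula in the multiset Γ, F, K⊥. -/
import Mathlib


inductive Fm : Type
  | var : ℕ → Fm
  | bot : Fm
  | and : Fm → Fm → Fm
  | or  : Fm → Fm → Fm
  | imp : Fm → Fm → Fm
  | K   : Fm → Fm
deriving DecidableEq

/-- ¬F abbreviates F → ⊥. -/
def Fm.neg (F : Fm) : Fm := F.imp .bot

/-- A is a propositional variable or ⊥. -/
def Fm.isAtom (A : Fm) : Prop := A = Fm.bot ∨ ∃ n, A = Fm.var n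

/-- K applied to each member of a multiset. -/
def Kset (Γ : Multiset Fm) : Multiset Fm := Γ.map Fm.K
/-- IELG⁻ parametrized by a predicate `good` that must hold of every sequent
occurring in the derivation (each sequent is the conclusion of a rule or an axiom). -/
inductive IELGmG (good : Multiset Fm → Fm → Prop) : ℕ → Multiset Fm → Fm → Prop
  | ax (n : ℕ) (Γ : Multiset Fm) (A : Fm) :
      A.isAtom → good (A ::ₘ Γ) A → IELGmG good n (A ::ₘ Γ) A
  | andL (n : ℕ) (Γ : Multiset Fm) (F G H : Fm) :
      good (F.and G ::ₘ Γ) H →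
      IELGmG good n (F ::ₘ G ::ₘ Γ) H → IELGmG good (n+1) (F.and G ::ₘ Γ) H
  | andR (n : ℕ) (Γ : Multiset Fm) (F G : Fm) :
      good Γ (F.and G) →
      IELGmG good n Γ F → IELGmG good n Γ G → IELGmG good (n+1) Γ (F.and G)
  | orL (n : ℕ) (Γ : Multiset Fm) (F G H : Fm) :
      good (F.or G ::ₘ Γ) H →
      IELGmG good n (F ::ₘ Γ) H → IELGmG good n (G ::ₘ Γ) H →
      IELGmG good (n+1) (F.or G ::ₘ Γ) H
  | orR1 (n : ℕ) (Γ : Multiset Fm) (F G : Fm) :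
      good Γ (F.or G) → IELGmG good n Γ F → IELGmG good (n+1) Γ (F.or G)
  | orR2 (n : ℕ) (Γ : Multiset Fm) (F G : Fm) :
      good Γ (F.or G) → IELGmG good n Γ G → IELGmG good (n+1) Γ (F.or G)
  | impL (n : ℕ) (Γ : Multiset Fm) (F G H : Fm) :
      good (F.imp G ::ₘ Γ) H →
      IELGmG good n (F.imp G ::ₘ Γ) F → IELGmG good n (G ::ₘ Γ) H →
      IELGmG good (n+1) (F.imp G ::ₘ Γ) H
  | impR (n : ℕ) (Γ : Multiset Fm) (F G : Fm) :
      good Γ (F.imp G) →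
      IELGmG good n (F ::ₘ Γ) G → IELGmG good (n+1) Γ (F.imp G)
  | KI1 (n : ℕ) (Γ Δ : Multiset Fm) (F : Fm) :
      (∀ G, Fm.K G ∉ Γ) → good (Γ + Kset Δ) (Fm.K F) →
      IELGmG good n (Γ + Kset Δ + Δ) F → IELGmG good (n+1) (Γ + Kset Δ) (Fm.K F)
  | U (n : ℕ) (Γ : Multiset Fm) (F : Fm) :
      good Γ F →
      IELGmG good n Γ (Fm.K Fm.bot) → IELGmG good (n+1) Γ F

/-- The subformula relation: `Subf G H` means G is a subformula of H. -/
inductive Subf : Fm → Fm → Prop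
  | refl (F : Fm) : Subf F F
  | andL (F G H : Fm) : Subf H F → Subf H (F.and G)
  | andR (F G H : Fm) : Subf H G → Subf H (F.and G)
  | orL (F G H : Fm) : Subf H F → Subf H (F.or G)
  | orR (F G H : Fm) : Subf H G → Subf H (F.or G)
  | impL (F G H : Fm) : Subf H F → Subf H (F.imp G)
  | impR (F G H : Fm) : Subf H G → Subf H (F.imp G)
  | K (F H : Fm) : Subf H F → Subf H (Fm.K F)

theorem Subf.trans {a : Fm} : ∀ {b c : Fm}, Subf a b → Subf b c → Subf a c := by
  intro b c h1 h2
  induction h2 with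
  | refl => exact h1
  | andL F G H _ ih => exact Subf.andL _ _ _ (ih h1)
  | andR F G H _ ih => exact Subf.andR _ _ _ (ih h1)
  | orL F G H _ ih => exact Subf.orL _ _ _ (ih h1)
  | orR F G H _ ih => exact Subf.orR _ _ _ (ih h1)
  | impL F G H _ ih => exact Subf.impL _ _ _ (ih h1)
  | impR F G H _ ih => exact Subf.impR _ _ _ (ih h1)
  | K F H _ ih => exact Subf.K _ _ (ih h1)

/-- Transfer of the subformula bound from conclusion to premise. -/
theorem step {S L₁ L₂ : Multiset Fm}
    (h1 : ∀ G ∈ L₁, ∃ G' ∈ L₂, Subf G G')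
    (h2 : ∀ G ∈ L₂, ∃ H ∈ S, Subf G H) :
    ∀ G ∈ L₁, ∃ H ∈ S, Subf G H := by
  intro G hG
  obtain ⟨G', hG', s⟩ := h1 G hG
  obtain ⟨H, hH, s'⟩ := h2 G' hG'
  exact ⟨H, hH, s.trans s'⟩

theorem mono {S : Multiset Fm} (hK : ∃ H ∈ S, Subf (Fm.K Fm.bot) H) :
    ∀ {n : ℕ} {Γ : Multiset Fm} {F : Fm},
    IELGmG (fun _ _ => True) n Γ F →
    (∀ G ∈ F ::ₘ Γ, ∃ H ∈ S, Subf G H) →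
    IELGmG (fun Γ' F' => ∀ G ∈ F' ::ₘ Γ', ∃ H ∈ S, Subf G H) n Γ F := by
  intro n0 Γ0 F0 h
  induction h with
  | ax n Γ A hA _ =>
    intro hP; exact IELGmG.ax n Γ A hA hP
  | andL n Γ F G H _ _ ih =>
    intro hP
    refine IELGmG.andL n Γ F G H hP (ih (step (L₂ := H ::ₘ F.and G ::ₘ Γ) ?_ hP))
    intro G' hG'
    simp only [Multiset.mem_cons] at hG'
    rcases hG' with h | h | h | h
    · exact ⟨H, by simp, by rw [h]; exact Subf.refl _⟩
    · exact ⟨F.and G, by simp, by rw [h]; exact Subf.andL _ _ _ (Subf.refl _)⟩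
    · exact ⟨F.and G, by simp, by rw [h]; exact Subf.andR _ _ _ (Subf.refl _)⟩
    · exact ⟨G', by simp [h], Subf.refl _⟩
  | andR n Γ F G _ _ _ ih1 ih2 =>
    intro hP
    refine IELGmG.andR n Γ F G hP
      (ih1 (step (L₂ := F.and G ::ₘ Γ) ?_ hP)) (ih2 (step (L₂ := F.and G ::ₘ Γ) ?_ hP)) <;>
    · intro G' hG'
      simp only [Multiset.mem_cons] at hG'
      rcases hG' with h | h
      · exact ⟨F.and G, by simp, by rw [h]; first
          | exact Subf.andL _ _ _ (Subf.refl _) | exact Subf.andR _ _ _ (Subf.refl _)⟩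
      · exact ⟨G', by simp [h], Subf.refl _⟩
  | orL n Γ F G H _ _ _ ih1 ih2 =>
    intro hP
    refine IELGmG.orL n Γ F G H hP
      (ih1 (step (L₂ := H ::ₘ F.or G ::ₘ Γ) ?_ hP)) (ih2 (step (L₂ := H ::ₘ F.or G ::ₘ Γ) ?_ hP)) <;>
    · intro G' hG'
      simp only [Multiset.mem_cons] at hG'
      rcases hG' with h | h | h
      · exact ⟨H, by simp, by rw [h]; exact Subf.refl _⟩
      · exact ⟨F.or G, by simp, by rw [h]; first
          | exact Subf.orL _ _ _ (Subf.refl _) | exact Subf.orR _ _ _ (Subf.refl _)⟩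
      · exact ⟨G', by simp [h], Subf.refl _⟩
  | orR1 n Γ F G _ _ ih =>
    intro hP
    refine IELGmG.orR1 n Γ F G hP (ih (step (L₂ := F.or G ::ₘ Γ) ?_ hP))
    intro G' hG'
    simp only [Multiset.mem_cons] at hG'
    rcases hG' with h | h
    · exact ⟨F.or G, by simp, by rw [h]; exact Subf.orL _ _ _ (Subf.refl _)⟩
    · exact ⟨G', by simp [h], Subf.refl _⟩
  | orR2 n Γ F G _ _ ih =>
    intro hP
    refine IELGmG.orR2 n Γ F G hP (ih (step (L₂ := F.or G ::ₘ Γ) ?_ hP))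
    intro G' hG'
    simp only [Multiset.mem_cons] at hG'
    rcases hG' with h | h
    · exact ⟨F.or G, by simp, by rw [h]; exact Subf.orR _ _ _ (Subf.refl _)⟩
    · exact ⟨G', by simp [h], Subf.refl _⟩
  | impL n Γ F G H _ _ _ ih1 ih2 =>
    intro hP
    refine IELGmG.impL n Γ F G H hP
      (ih1 (step (L₂ := H ::ₘ F.imp G ::ₘ Γ) ?_ hP)) (ih2 (step (L₂ := H ::ₘ F.imp G ::ₘ Γ) ?_ hP))
    · intro G' hG'
      simp only [Multiset.mem_cons] at hG'
      rcases hG' with h | h | h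
      · exact ⟨F.imp G, by simp, by rw [h]; exact Subf.impL _ _ _ (Subf.refl _)⟩
      · exact ⟨F.imp G, by simp, by rw [h]; exact Subf.refl _⟩
      · exact ⟨G', by simp [h], Subf.refl _⟩
    · intro G' hG'
      simp only [Multiset.mem_cons] at hG'
      rcases hG' with h | h | h
      · exact ⟨H, by simp, by rw [h]; exact Subf.refl _⟩
      · exact ⟨F.imp G, by simp, by rw [h]; exact Subf.impR _ _ _ (Subf.refl _)⟩
      · exact ⟨G', by simp [h], Subf.refl _⟩
  | impR n Γ F G _ _ ih =>
    intro hP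
    refine IELGmG.impR n Γ F G hP (ih (step (L₂ := F.imp G ::ₘ Γ) ?_ hP))
    intro G' hG'
    simp only [Multiset.mem_cons] at hG'
    rcases hG' with h | h | h
    · exact ⟨F.imp G, by simp, by rw [h]; exact Subf.impR _ _ _ (Subf.refl _)⟩
    · exact ⟨F.imp G, by simp, by rw [h]; exact Subf.impL _ _ _ (Subf.refl _)⟩
    · exact ⟨G', by simp [h], Subf.refl _⟩
  | KI1 n Γ Δ F hnoK _ _ ih =>
    intro hP
    refine IELGmG.KI1 n Γ Δ F hnoK hP (ih (step (L₂ := Fm.K F ::ₘ (Γ + Kset Δ)) ?_ hP))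
    intro G' hG'
    simp only [Multiset.mem_cons, Multiset.mem_add] at hG'
    rcases hG' with h | (h | h) | h
    · exact ⟨Fm.K F, by simp, by rw [h]; exact Subf.K _ _ (Subf.refl _)⟩
    · exact ⟨G', by simp [Multiset.mem_add, h], Subf.refl _⟩
    · exact ⟨G', by simp [Multiset.mem_add, h], Subf.refl _⟩
    · refine ⟨Fm.K G', ?_, Subf.K _ _ (Subf.refl _)⟩
      simp only [Multiset.mem_cons, Multiset.mem_add]
      right; right
      exact Multiset.mem_map_of_mem _ h
  | U n Γ F _ _ ih =>
    intro hP
    refine IELGmG.U n Γ F hP (ih ?_)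
    intro G' hG'
    simp only [Multiset.mem_cons] at hG'
    rcases hG' with h | h
    · exact h ▸ hK
    · exact hP G' (by simp [h])

/-- Subformula property: any IELG⁻-derivation of Γ ⇒ F is (can be taken to be)
such that every formula in every sequent of the derivation is a subformula of
some formula of the multiset Γ, F, K⊥. -/
theorem stmt15 (n : ℕ) (Γ : Multiset Fm) (F : Fm)
    (h : IELGmG (fun _ _ => True) n Γ F) :
    IELGmG (fun Γ' F' => ∀ G ∈ F' ::ₘ Γ',
      ∃ H ∈ F ::ₘ Fm.K Fm.bot ::ₘ Γ, Subf G H) n Γ F := by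
  refine mono ⟨Fm.K Fm.bot, by simp, Subf.refl _⟩ h ?_
  intro G hG
  simp only [Multiset.mem_cons] at hG
  rcases hG with rfl | hG
  · exact ⟨G, by simp, Subf.refl _⟩
  · exact ⟨G, by simp [hG], Subf.refl _⟩
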